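/- Let ℬ ⊆ 𝒫(ℕ) be an s-sick algebra. Define J(ℬ) = { A ⊆ ℕ : every subset of A belongs to ℬ } and J(ℬ)^⊥ = { A ⊆ ℕ : A ∩ B is finite for every B ∈ J(ℬ) }. Then J(ℬ)^⊥ is a countably generated ideal of subsets of ℕ: there is a sequence (X_m)_{m∈ℕ} of elements of J(ℬ)^⊥ such that every A ∈ J(ℬ)^⊥ is contained in a union of finitely many of the X_m. Moreover, the set J(ℬ)^⊥ ∩ ℬ is countable. -/

import Mathlib

open MeasureTheory Topology Filter Set

/-- A compact Hausdorff space `K` is *sick* if there are a separable Banach lattice `E`,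
a positive `u : E`, and an injective linear lattice homomorphism `T : C(K, ℝ) → E` with
`T 1 = u` whose range is the principal ideal generated by `u`. -/
def IsSick (K : Type*) [TopologicalSpace K] : Prop :=
  ∃ (E : Type) (_ : NormedAddCommGroup E) (_ : Lattice E) (_ : IsOrderedAddMonoid E)
    (_ : HasSolidNorm E) (_ : NormedSpace ℝ E) (_ : PosSMulStrictMono ℝ E) (_ : PosSMulReflectLT ℝ E)
    (_ : CompleteSpace E) (_ : TopologicalSpace.SeparableSpace E)
    (u : E) (T : C(K, ℝ) →ₗ[ℝ] E),
    0 ≤ u ∧ Function.Injective T ∧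
      (∀ f g : C(K, ℝ), T (f ⊔ g) = T f ⊔ T g) ∧
      T 1 = u ∧
      Set.range T = {y : E | ∃ r : ℝ, 0 < r ∧ |y| ≤ r • u}

/-- A family `𝒜 ⊆ 𝒫(ℕ)` is an *s-sick algebra* if it is a Boolean subalgebra of `𝒫(ℕ)`
containing all finite sets which is isomorphic, as a Boolean algebra, to the algebra of clopen
subsets of some sick compactum. -/
def IsSSickAlgebra (𝒜 : Set (Set ℕ)) : Prop :=
  (∅ : Set ℕ) ∈ 𝒜 ∧ (Set.univ : Set ℕ) ∈ 𝒜 ∧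
  (∀ A ∈ 𝒜, Aᶜ ∈ 𝒜) ∧ (∀ A ∈ 𝒜, ∀ B ∈ 𝒜, A ∪ B ∈ 𝒜) ∧ (∀ A ∈ 𝒜, ∀ B ∈ 𝒜, A ∩ B ∈ 𝒜) ∧
  (∀ A : Set ℕ, A.Finite → A ∈ 𝒜) ∧
  ∃ (K : Type) (_ : TopologicalSpace K) (_ : CompactSpace K) (_ : T2Space K),
    IsSick K ∧
    ∃ Φ : Set ℕ → Set K,
      Set.BijOn Φ 𝒜 {U : Set K | IsClopen U} ∧
      (∀ A ∈ 𝒜, ∀ B ∈ 𝒜, Φ (A ∪ B) = Φ A ∪ Φ B) ∧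
      (∀ A ∈ 𝒜, ∀ B ∈ 𝒜, Φ (A ∩ B) = Φ A ∩ Φ B) ∧
      (∀ A ∈ 𝒜, Φ Aᶜ = (Φ A)ᶜ)

/-- The ideal `J(ℬ)` of sets all of whose subsets belong to `ℬ`. -/
def JIdeal (ℬ : Set (Set ℕ)) : Set (Set ℕ) := {A : Set ℕ | ∀ B ⊆ A, B ∈ ℬ}

/-- The orthogonal ideal `J(ℬ)^⊥` of sets having finite intersection with every member of
`J(ℬ)`. -/
def JPerp (ℬ : Set (Set ℕ)) : Set (Set ℕ) := {A : Set ℕ | ∀ B ∈ JIdeal ℬ, (A ∩ B).Finite}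

open scoped Classical

/-! ### Auxiliary: continuous indicator functions of clopen sets -/

noncomputable def cind {K : Type} [TopologicalSpace K] (U : Set K) : C(K, ℝ) :=
  if h : IsClopen U then
    ⟨U.indicator 1, continuous_indicator (by simp [h]) continuous_const.continuousOn⟩
  else 0

section cindFacts
variable {K : Type} [TopologicalSpace K]

lemma cind_apply {U : Set K} (h : IsClopen U) (x : K) :
    cind U x = if x ∈ U then 1 else 0 := by
  simp [cind, h, Set.indicator_apply]

lemma cind_sup {U V : Set K} (hU : IsClopen U) (hV : IsClopen V) :
    cind (U ∪ V) = cind U ⊔ cind V := by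
  ext x
  simp only [ContinuousMap.sup_apply, cind_apply (hU.union hV), cind_apply hU, cind_apply hV,
    Set.mem_union]
  by_cases hx : x ∈ U <;> by_cases hy : x ∈ V <;> simp [hx, hy]

lemma cind_inf {U V : Set K} (hU : IsClopen U) (hV : IsClopen V) :
    cind (U ∩ V) = cind U ⊓ cind V := by
  ext x
  simp only [ContinuousMap.inf_apply, cind_apply (hU.inter hV), cind_apply hU, cind_apply hV,
    Set.mem_inter_iff]
  by_cases hx : x ∈ U <;> by_cases hy : x ∈ V <;> simp [hx, hy]

lemma cind_empty : cind (∅ : Set K) = 0 := by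
  ext x; simp [cind_apply isClopen_empty]

lemma cind_univ : cind (Set.univ : Set K) = 1 := by
  ext x; simp [cind_apply isClopen_univ]

lemma cind_compl {U : Set K} (hU : IsClopen U) : cind Uᶜ = 1 - cind U := by
  ext x
  simp only [ContinuousMap.sub_apply, ContinuousMap.one_apply, cind_apply hU.compl,
    cind_apply hU, Set.mem_compl_iff]
  by_cases hx : x ∈ U <;> simp [hx]

lemma cind_inj {U V : Set K} (hU : IsClopen U) (hV : IsClopen V) (h : cind U = cind V) :
    U = V := by
  ext x
  have h2 : cind U x = cind V x := by rw [h]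
  simp only [cind_apply hU, cind_apply hV] at h2
  by_cases hx : x ∈ U <;> by_cases hy : x ∈ V <;> simp [hx, hy] at h2 ⊢

lemma cind_nonneg {U : Set K} (hU : IsClopen U) : (0 : C(K, ℝ)) ≤ cind U := by
  intro x
  show (0 : C(K, ℝ)) x ≤ cind U x
  simp only [ContinuousMap.zero_apply, cind_apply hU]
  split <;> norm_num

lemma cind_le_one {U : Set K} (hU : IsClopen U) : cind U ≤ 1 := by
  intro x
  show cind U x ≤ (1 : C(K, ℝ)) x
  simp only [ContinuousMap.one_apply, cind_apply hU]
  split <;> norm_num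

lemma cind_abs_sub {U V : Set K} (hU : IsClopen U) (hV : IsClopen V) :
    |cind U - cind V| = cind ((U ∩ Vᶜ) ∪ (V ∩ Uᶜ)) := by
  ext x
  have h1 : IsClopen ((U ∩ Vᶜ) ∪ (V ∩ Uᶜ)) := (hU.inter hV.compl).union (hV.inter hU.compl)
  simp only [ContinuousMap.abs_apply, ContinuousMap.sub_apply, cind_apply hU, cind_apply hV,
    cind_apply h1, Set.mem_union, Set.mem_inter_iff, Set.mem_compl_iff]
  by_cases hx : x ∈ U <;> by_cases hy : x ∈ V <;> simp [hx, hy]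

variable {E : Type} [NormedAddCommGroup E] [Lattice E] [IsOrderedAddMonoid E] [HasSolidNorm E] [NormedSpace ℝ E]
variable {T : C(K, ℝ) →ₗ[ℝ] E}

lemma T_inf (hTsup : ∀ f g : C(K, ℝ), T (f ⊔ g) = T f ⊔ T g) (f g : C(K, ℝ)) :
    T (f ⊓ g) = T f ⊓ T g := by
  have h1 : f ⊓ g = -((-f) ⊔ (-g)) := by rw [neg_sup, neg_neg, neg_neg]
  rw [h1, map_neg, hTsup, neg_sup, map_neg, map_neg, neg_neg, neg_neg]

lemma T_mono (hTsup : ∀ f g : C(K, ℝ), T (f ⊔ g) = T f ⊔ T g) {f g : C(K, ℝ)} (h : f ≤ g) :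
    T f ≤ T g := by
  have h2 : T (f ⊔ g) = T f ⊔ T g := hTsup f g
  rw [sup_eq_right.mpr h] at h2
  rw [h2]; exact le_sup_left

lemma T_abs' (hTsup : ∀ f g : C(K, ℝ), T (f ⊔ g) = T f ⊔ T g) (f : C(K, ℝ)) :
    T |f| = |T f| := by
  have h1 : |f| = f ⊔ (-f) := rfl
  have h2 : |T f| = T f ⊔ (-(T f)) := rfl
  rw [h1, h2, hTsup, map_neg]

noncomputable def ee (Φ : Set ℕ → Set K) (T : C(K, ℝ) →ₗ[ℝ] E) (A : Set ℕ) : E :=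
  T (cind (Φ A))

end cindFacts

/-! ### Auxiliary: separated sets in separable metric spaces -/

lemma countable_of_eps_sep {X : Type*} [MetricSpace X] [TopologicalSpace.SeparableSpace X]
    {S : Set X} {ε : ℝ} (hε : 0 < ε) (hS : ∀ x ∈ S, ∀ y ∈ S, x ≠ y → ε ≤ dist x y) :
    S.Countable := by
  obtain ⟨D, hDc, hDd⟩ := TopologicalSpace.exists_countable_dense X
  have hDco : Countable D := hDc.to_subtype
  have key : ∀ s : S, ∃ d : D, dist (s : X) (d : X) < ε / 2 := by
    intro s
    obtain ⟨y, hy1, hy2⟩ := Metric.dense_iff.mp hDd (s : X) (ε / 2) (by linarith)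
    exact ⟨⟨y, hy2⟩, by simpa [Metric.mem_ball, dist_comm] using hy1⟩
  choose f hf using key
  have hinj : Function.Injective f := by
    intro s t hst
    by_contra hne
    have hd : ε ≤ dist (s : X) (t : X) :=
      hS s s.2 t t.2 (fun hh => hne (Subtype.ext hh))
    have h1 := hf s
    have h2 := hf t
    rw [hst] at h1
    have h3 := dist_triangle (s : X) ((f t : D) : X) (t : X)
    rw [dist_comm ((f t : D) : X) (t : X)] at h3
    linarith
  have : Countable S := hinj.countable
  exact Set.countable_coe_iff.mp this

lemma uncountable_powerset_embed {X : Type*} [MetricSpace X]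
    [TopologicalSpace.SeparableSpace X] {ε : ℝ} (hε : 0 < ε) (g : Set ℕ → X)
    (hg : ∀ s t : Set ℕ, s ≠ t → ε ≤ dist (g s) (g t)) : False := by
  have hginj : Function.Injective g := by
    intro s t hst
    by_contra hne
    have := hg s t hne
    rw [hst, dist_self] at this
    linarith
  have hc : (Set.range g).Countable := by
    apply countable_of_eps_sep hε
    rintro _ ⟨s, rfl⟩ _ ⟨t, rfl⟩ hne
    exact hg s t (fun hh => hne (by rw [hh]))
  have : Countable (Set ℕ) := by
    have h1 : Countable (Set.range g) := hc.to_subtype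
    exact (Function.Injective.countable (f := Set.rangeFactorization g)
      (fun a b hab => hginj (congrArg Subtype.val hab)))
  obtain ⟨f, hfinj⟩ := this.exists_injective_nat (α := Set ℕ)
  exact Function.cantor_injective f hfinj

theorem core_J
    {K : Type} [TopologicalSpace K]
    {E : Type} [NormedAddCommGroup E] [Lattice E] [IsOrderedAddMonoid E] [HasSolidNorm E] [NormedSpace ℝ E]
    [PosSMulStrictMono ℝ E] [PosSMulReflectLT ℝ E]
    [CompleteSpace E]
    (ℬ : Set (Set ℕ)) (Φ : Set ℕ → Set K) (u : E) (T : C(K, ℝ) →ₗ[ℝ] E)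
    (hBempty : (∅ : Set ℕ) ∈ ℬ) (hBcompl : ∀ A ∈ ℬ, Aᶜ ∈ ℬ)
    (hBfin : ∀ A : Set ℕ, A.Finite → A ∈ ℬ)
    (hTinj : Function.Injective T)
    (hTsup : ∀ f g : C(K, ℝ), T (f ⊔ g) = T f ⊔ T g) (hT1 : T 1 = u)
    (hTrange : Set.range T = {y : E | ∃ r : ℝ, 0 < r ∧ |y| ≤ r • u})
    (hΦbij : Set.BijOn Φ ℬ {U : Set K | IsClopen U})
    (hΦunion : ∀ A ∈ ℬ, ∀ B ∈ ℬ, Φ (A ∪ B) = Φ A ∪ Φ B)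
    (hΦinter : ∀ A ∈ ℬ, ∀ B ∈ ℬ, Φ (A ∩ B) = Φ A ∩ Φ B)
    (hΦcompl : ∀ A ∈ ℬ, Φ Aᶜ = (Φ A)ᶜ)
    (ν : ℕ → ℕ) (hν : Function.Injective ν)
    (hnorm : ∀ k : ℕ, ‖ee Φ T ({ν k} : Set ℕ)‖ ≤ (1/2 : ℝ) ^ k) :
    Set.range ν ∈ JIdeal ℬ := by
  -- basic Φ facts
  have hclo : ∀ A ∈ ℬ, IsClopen (Φ A) := fun A hA => hΦbij.mapsTo hA
  have hpu : Φ (Set.univ : Set ℕ) = (Set.univ : Set K) := by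
    have h1 : Φ ((∅ : Set ℕ) ∪ ∅ᶜ) = Φ ∅ ∪ Φ ∅ᶜ := hΦunion ∅ hBempty ∅ᶜ (hBcompl ∅ hBempty)
    have h2 : Φ (∅ : Set ℕ)ᶜ = (Φ ∅)ᶜ := hΦcompl ∅ hBempty
    rw [Set.union_compl_self, h2, Set.union_compl_self] at h1
    exact h1
  have hpe : Φ (∅ : Set ℕ) = (∅ : Set K) := by
    have h1 : Φ ((∅ : Set ℕ) ∩ ∅ᶜ) = Φ ∅ ∩ Φ ∅ᶜ := hΦinter ∅ hBempty ∅ᶜ (hBcompl ∅ hBempty)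
    have h2 : Φ (∅ : Set ℕ)ᶜ = (Φ ∅)ᶜ := hΦcompl ∅ hBempty
    rw [Set.inter_compl_self, h2, Set.inter_compl_self] at h1
    exact h1
  -- basic e facts
  have he0 : ee Φ T (∅ : Set ℕ) = 0 := by
    unfold ee; rw [hpe, cind_empty, map_zero]
  have heu : ee Φ T (Set.univ : Set ℕ) = u := by
    unfold ee; rw [hpu, cind_univ, hT1]
  have heU : ∀ A ∈ ℬ, ∀ B ∈ ℬ, ee Φ T (A ∪ B) = ee Φ T A ⊔ ee Φ T B := by
    intro A hA B hB
    unfold ee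
    rw [hΦunion A hA B hB, cind_sup (hclo A hA) (hclo B hB), hTsup]
  have heI : ∀ A ∈ ℬ, ∀ B ∈ ℬ, ee Φ T (A ∩ B) = ee Φ T A ⊓ ee Φ T B := by
    intro A hA B hB
    unfold ee
    rw [hΦinter A hA B hB, cind_inf (hclo A hA) (hclo B hB), T_inf hTsup]
  have heC : ∀ A ∈ ℬ, ee Φ T Aᶜ = u - ee Φ T A := by
    intro A hA
    unfold ee
    rw [hΦcompl A hA, cind_compl (hclo A hA), map_sub, hT1]
  have he_nonneg : ∀ A ∈ ℬ, 0 ≤ ee Φ T A := by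
    intro A hA
    have := T_mono hTsup (cind_nonneg (hclo A hA))
    rwa [map_zero] at this
  have he_le_u : ∀ A ∈ ℬ, ee Φ T A ≤ u := by
    intro A hA
    have := T_mono hTsup (cind_le_one (hclo A hA))
    rwa [hT1] at this
  have he_inj : ∀ A ∈ ℬ, ∀ B ∈ ℬ, ee Φ T A = ee Φ T B → A = B := by
    intro A hA B hB hAB
    exact hΦbij.injOn hA hB (cind_inj (hclo A hA) (hclo B hB) (hTinj hAB))
  -- finite additivity
  have hsum : ∀ G : Finset ℕ, ∑ k ∈ G, ee Φ T ({ν k} : Set ℕ) = ee Φ T (ν '' ↑G) := by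
    intro G
    induction G using Finset.induction_on with
    | empty => simp [he0]
    | insert _ _ ha ih =>
      rename_i a G'
      rw [Finset.sum_insert ha, ih]
      have himg : ν '' ↑(insert a G') = ({ν a} : Set ℕ) ∪ ν '' ↑G' := by
        rw [Finset.coe_insert, Set.image_insert_eq, Set.insert_eq]
      have hd : ({ν a} : Set ℕ) ∩ (ν '' ↑G') = ∅ := by
        ext x
        simp only [Set.mem_inter_iff, Set.mem_singleton_iff, Set.mem_image, Finset.mem_coe,
          Set.mem_empty_iff_false, iff_false, not_and]
        rintro rfl ⟨b, hb, hba⟩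
        exact ha (hν hba ▸ hb)
      have h1 : ({ν a} : Set ℕ) ∈ ℬ := hBfin _ (Set.finite_singleton _)
      have h2 : (ν '' ↑G' : Set ℕ) ∈ ℬ := hBfin _ (G'.finite_toSet.image ν)
      have h3 := heI _ h1 _ h2
      rw [hd, he0] at h3
      have h4 := heU _ h1 _ h2
      rw [himg, heU _ h1 _ h2,
        ← inf_add_sup (ee Φ T ({ν a} : Set ℕ)) (ee Φ T (ν '' (↑G' : Set ℕ))), ← h3, zero_add]
  -- main argument
  intro C hC
  set S : Set ℕ := ν ⁻¹' C with hS
  have hCS : ν '' S = C := by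
    rw [hS, Set.image_preimage_eq_inter_range, Set.inter_eq_left]
    exact hC
  set f' : ℕ → E := fun k => if k ∈ S then ee Φ T ({ν k} : Set ℕ) else 0 with hf'
  have hsummable : Summable f' := by
    apply Summable.of_norm_bounded (g := fun k => (1/2 : ℝ) ^ k)
      (summable_geometric_of_lt_one (by norm_num) (by norm_num))
    intro k
    by_cases h : k ∈ S
    · simpa [hf', h] using hnorm k
    · simp only [hf', h, if_false, norm_zero]
      positivity
  set s : E := ∑' k, f' k with hs
  have hHS : HasSum f' s := hsummable.hasSum
  have hp : Tendsto (fun G : Finset ℕ => ∑ k ∈ G, f' k) atTop (𝓝 s) := hHS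
  set D : Finset ℕ → Set ℕ := fun G => ν '' ↑(G.filter (· ∈ S)) with hD
  have hDfin : ∀ G, (D G).Finite := fun G => ((G.filter (· ∈ S)).finite_toSet).image ν
  have hDB : ∀ G, D G ∈ ℬ := fun G => hBfin _ (hDfin G)
  have hDC : ∀ G, D G ⊆ C := by
    intro G x hx
    obtain ⟨k, hk, rfl⟩ := hx
    have : k ∈ S := (Finset.mem_filter.mp hk).2
    exact this
  have hpart : ∀ G : Finset ℕ, ∑ k ∈ G, f' k = ee Φ T (D G) := by
    intro G
    rw [hD]
    rw [← hsum (G.filter (· ∈ S))]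
    rw [Finset.sum_filter]
  have hp' : Tendsto (fun G : Finset ℕ => ee Φ T (D G)) atTop (𝓝 s) := hp.congr hpart
  have hs0 : 0 ≤ s := ge_of_tendsto' hp' fun G => he_nonneg _ (hDB G)
  have hsu : s ≤ u := le_of_tendsto' hp' fun G => he_le_u _ (hDB G)
  have hinf0 : s ⊓ (u - s) = 0 := by
    have t1 : Tendsto (fun G : Finset ℕ => ee Φ T (D G) ⊓ (u - ee Φ T (D G))) atTop
        (𝓝 (s ⊓ (u - s))) := hp'.inf_nhds (tendsto_const_nhds.sub hp')
    have t2 : ∀ G : Finset ℕ, ee Φ T (D G) ⊓ (u - ee Φ T (D G)) = 0 := by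
      intro G
      have h3 := heI _ (hDB G) _ (hBcompl _ (hDB G))
      rw [Set.inter_compl_self, he0] at h3
      rw [← heC _ (hDB G), ← h3]
    have t3 : Tendsto (fun _ : Finset ℕ => (0 : E)) atTop (𝓝 (s ⊓ (u - s))) :=
      t1.congr t2
    exact (tendsto_nhds_unique t3 tendsto_const_nhds)
  have hmem : s ∈ Set.range ⇑T := by
    rw [hTrange]
    refine ⟨1, one_pos, ?_⟩
    rw [abs_of_nonneg hs0, one_smul]
    exact hsu
  obtain ⟨f, hf⟩ := hmem
  have hfinf : f ⊓ (1 - f) = 0 := by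
    apply hTinj
    rw [T_inf hTsup, map_sub, hT1, hf, map_zero, hinf0]
  have hval : ∀ x : K, f x = 0 ∨ f x = 1 := by
    intro x
    have h1 : (f ⊓ (1 - f)) x = (0 : C(K, ℝ)) x := by rw [hfinf]
    rw [ContinuousMap.inf_apply, ContinuousMap.sub_apply, ContinuousMap.one_apply,
      ContinuousMap.zero_apply] at h1
    rcases le_total (f x) (1 - f x) with h | h
    · left; rw [min_eq_left h] at h1; exact h1
    · right; rw [min_eq_right h] at h1; linarith
  set V : Set K := f ⁻¹' {1} with hV
  have hVclo : IsClopen V := by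
    constructor
    · exact IsClosed.preimage f.continuous isClosed_singleton
    · have : V = f ⁻¹' (Set.Ioi (1/2 : ℝ)) := by
        ext x
        rcases hval x with h | h <;>
          simp [hV, Set.mem_preimage, h, Set.mem_Ioi] <;> norm_num
      rw [this]
      exact IsOpen.preimage f.continuous isOpen_Ioi
  have hfV : cind V = f := by
    ext x
    rw [cind_apply hVclo]
    rcases hval x with h | h
    · have : x ∉ V := by simp [hV, h]
      simp [this, h]
    · have : x ∈ V := by simp [hV, h]
      simp [this, h]
  obtain ⟨A0, hA0B, hA0⟩ := hΦbij.surjOn (show V ∈ {U : Set K | IsClopen U} from hVclo)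
  have hes : ee Φ T A0 = s := by
    unfold ee
    rw [hA0, hfV, hf]
  -- pointwise identification
  have hlim : ∀ n : ℕ, Tendsto (fun G : Finset ℕ => ee Φ T ({n} ∩ D G)) atTop
      (𝓝 (ee Φ T ({n} : Set ℕ) ⊓ s)) := by
    intro n
    have t1 : Tendsto (fun G : Finset ℕ => ee Φ T ({n} : Set ℕ) ⊓ ee Φ T (D G)) atTop
        (𝓝 (ee Φ T ({n} : Set ℕ) ⊓ s)) := tendsto_const_nhds.inf_nhds hp'
    apply t1.congr
    intro G
    rw [← heI _ (hBfin _ (Set.finite_singleton n)) _ (hDB G)]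
  have hnotin : ∀ n : ℕ, n ∉ C → ee Φ T ({n} : Set ℕ) ⊓ s = 0 := by
    intro n hn
    have t2 : ∀ G : Finset ℕ, ee Φ T (({n} : Set ℕ) ∩ D G) = 0 := by
      intro G
      have : ({n} : Set ℕ) ∩ D G = ∅ := by
        apply Set.eq_empty_of_forall_notMem
        rintro x ⟨hx1, hx2⟩
        rw [Set.mem_singleton_iff] at hx1
        exact hn (hx1 ▸ hDC G hx2)
      rw [this, he0]
    exact tendsto_nhds_unique ((hlim n).congr t2) tendsto_const_nhds
  have hin : ∀ n : ℕ, n ∈ C → ee Φ T ({n} : Set ℕ) ⊓ s = ee Φ T ({n} : Set ℕ) := by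
    intro n hn
    have hnr : n ∈ Set.range ν := hC hn
    obtain ⟨k, rfl⟩ := hnr
    have hkS : k ∈ S := by rwa [hS, Set.mem_preimage]
    have t2 : ∀ᶠ G : Finset ℕ in atTop, ee Φ T (({ν k} : Set ℕ) ∩ D G)
        = ee Φ T ({ν k} : Set ℕ) := by
      filter_upwards [Filter.eventually_ge_atTop ({k} : Finset ℕ)] with G hG
      have hkG : k ∈ G := hG (Finset.mem_singleton_self k)
      have : ({ν k} : Set ℕ) ∩ D G = ({ν k} : Set ℕ) := by
        rw [Set.inter_eq_left, Set.singleton_subset_iff]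
        exact ⟨k, Finset.mem_filter.mpr ⟨hkG, hkS⟩, rfl⟩
      rw [this]
    exact tendsto_nhds_unique (Tendsto.congr' t2 (hlim (ν k))) tendsto_const_nhds
  -- conclude C = A0
  have hCA0 : C = A0 := by
    ext n
    have hsingB : ({n} : Set ℕ) ∈ ℬ := hBfin _ (Set.finite_singleton n)
    have hinterB : ({n} : Set ℕ) ∩ A0 ∈ ℬ := hBfin _ ((Set.finite_singleton n).inter_of_left _)
    have hkey : ee Φ T (({n} : Set ℕ) ∩ A0) = ee Φ T ({n} : Set ℕ) ⊓ s := by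
      rw [heI _ hsingB _ hA0B, hes]
    constructor
    · intro hn
      have h1 : ee Φ T (({n} : Set ℕ) ∩ A0) = ee Φ T ({n} : Set ℕ) := by
        rw [hkey, hin n hn]
      have h2 := he_inj _ hinterB _ hsingB h1
      have h3 : n ∈ ({n} : Set ℕ) ∩ A0 := by rw [h2]; exact Set.mem_singleton n
      exact h3.2
    · intro hn
      by_contra hnc
      have h1 : ee Φ T (({n} : Set ℕ) ∩ A0) = 0 := by
        rw [hkey, hnotin n hnc]
      rw [← he0] at h1
      have h2 := he_inj _ hinterB _ hBempty h1
      have h3 : n ∈ ({n} : Set ℕ) ∩ A0 := ⟨Set.mem_singleton n, hn⟩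
      rw [h2] at h3
      exact h3
  rw [hCA0]
  exact hA0B

theorem core_Y
    {K : Type} [TopologicalSpace K]
    {E : Type} [NormedAddCommGroup E] [Lattice E] [IsOrderedAddMonoid E] [HasSolidNorm E] [NormedSpace ℝ E]
    [TopologicalSpace.SeparableSpace E]
    (ℬ : Set (Set ℕ)) (Φ : Set ℕ → Set K) (T : C(K, ℝ) →ₗ[ℝ] E)
    (hBempty : (∅ : Set ℕ) ∈ ℬ) (hBcompl : ∀ A ∈ ℬ, Aᶜ ∈ ℬ)
    (hBinter : ∀ A ∈ ℬ, ∀ B ∈ ℬ, A ∩ B ∈ ℬ)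
    (hTinj : Function.Injective T)
    (hTsup : ∀ f g : C(K, ℝ), T (f ⊔ g) = T f ⊔ T g)
    (hΦbij : Set.BijOn Φ ℬ {U : Set K | IsClopen U})
    (hΦunion : ∀ A ∈ ℬ, ∀ B ∈ ℬ, Φ (A ∪ B) = Φ A ∪ Φ B)
    (hΦinter : ∀ A ∈ ℬ, ∀ B ∈ ℬ, Φ (A ∩ B) = Φ A ∩ Φ B)
    (hΦcompl : ∀ A ∈ ℬ, Φ Aᶜ = (Φ A)ᶜ)
    (ε : ℝ) (hε : 0 < ε) :
    {n : ℕ | ε ≤ ‖ee Φ T ({n} : Set ℕ)‖} ∈ JPerp ℬ := by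
  have hclo : ∀ A ∈ ℬ, IsClopen (Φ A) := fun A hA => hΦbij.mapsTo hA
  have heU : ∀ A ∈ ℬ, ∀ B ∈ ℬ, ee Φ T (A ∪ B) = ee Φ T A ⊔ ee Φ T B := by
    intro A hA B hB
    unfold ee
    rw [hΦunion A hA B hB, cind_sup (hclo A hA) (hclo B hB), hTsup]
  have he_mono : ∀ A ∈ ℬ, ∀ B ∈ ℬ, A ⊆ B → ee Φ T A ≤ ee Φ T B := by
    intro A hA B hB hAB
    have h1 := heU A hA B hB
    rw [Set.union_eq_self_of_subset_left hAB] at h1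
    rw [h1]
    exact le_sup_left
  have he_nonneg : ∀ A ∈ ℬ, 0 ≤ ee Φ T A := by
    intro A hA
    have h2 : T ((0 : C(K, ℝ)) ⊔ cind (Φ A)) = T 0 ⊔ T (cind (Φ A)) := hTsup _ _
    rw [sup_eq_right.mpr (cind_nonneg (hclo A hA)), map_zero] at h2
    unfold ee
    rw [h2]
    exact le_sup_left
  have he_abs : ∀ A ∈ ℬ, ∀ B ∈ ℬ,
      |ee Φ T A - ee Φ T B| = ee Φ T ((A ∩ Bᶜ) ∪ (B ∩ Aᶜ)) := by
    intro A hA B hB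
    have mAB : A ∩ Bᶜ ∈ ℬ := hBinter A hA Bᶜ (hBcompl B hB)
    have mBA : B ∩ Aᶜ ∈ ℬ := hBinter B hB Aᶜ (hBcompl A hA)
    have hphi : Φ ((A ∩ Bᶜ) ∪ (B ∩ Aᶜ)) = (Φ A ∩ (Φ B)ᶜ) ∪ (Φ B ∩ (Φ A)ᶜ) := by
      rw [hΦunion _ mAB _ mBA, hΦinter A hA Bᶜ (hBcompl B hB),
        hΦinter B hB Aᶜ (hBcompl A hA), hΦcompl B hB, hΦcompl A hA]
    unfold ee
    rw [hphi, ← cind_abs_sub (hclo A hA) (hclo B hB), ← map_sub, T_abs' hTsup]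
  intro B hBJ
  by_contra hfin
  have hI : ({n : ℕ | ε ≤ ‖ee Φ T ({n} : Set ℕ)‖} ∩ B).Infinite := hfin
  set em := Set.Infinite.natEmbedding _ hI with hem
  set ν' : ℕ → ℕ := fun k => ↑(em k) with hν'
  have hνinj : Function.Injective ν' := fun a b hab =>
    em.injective (Subtype.coe_injective hab)
  have hmemY : ∀ k, ε ≤ ‖ee Φ T ({ν' k} : Set ℕ)‖ := fun k => (em k).2.1
  have hmemB : ∀ k, ν' k ∈ B := fun k => (em k).2.2
  set g : Set ℕ → E := fun s => ee Φ T (ν' '' s) with hg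
  have himB : ∀ s : Set ℕ, ν' '' s ⊆ B := by
    rintro s x ⟨k, _, rfl⟩
    exact hmemB k
  apply uncountable_powerset_embed hε g
  intro s t hst
  have hne : ∃ n, (n ∈ s ∧ n ∉ t) ∨ (n ∈ t ∧ n ∉ s) := by
    by_contra hc
    push_neg at hc
    apply hst
    ext m
    have := hc m
    tauto
  obtain ⟨n, hn⟩ := hne
  set Δ : Set ℕ := (ν' '' s ∩ (ν' '' t)ᶜ) ∪ (ν' '' t ∩ (ν' '' s)ᶜ) with hΔ
  have hΔB : Δ ⊆ B := by
    rintro x (⟨hx, -⟩ | ⟨hx, -⟩)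
    · exact himB s hx
    · exact himB t hx
  have hΔℬ : Δ ∈ ℬ := hBJ _ hΔB
  have hsℬ : ν' '' s ∈ ℬ := hBJ _ (himB s)
  have htℬ : ν' '' t ∈ ℬ := hBJ _ (himB t)
  have hxΔ : ν' n ∈ Δ := by
    rcases hn with ⟨h1, h2⟩ | ⟨h1, h2⟩
    · left
      refine ⟨⟨n, h1, rfl⟩, ?_⟩
      rintro ⟨m, hm, heq⟩
      exact h2 (hνinj heq ▸ hm)
    · right
      refine ⟨⟨n, h1, rfl⟩, ?_⟩
      rintro ⟨m, hm, heq⟩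
      exact h2 (hνinj heq ▸ hm)
  have hsing : ({ν' n} : Set ℕ) ∈ ℬ := hBJ _ (Set.singleton_subset_iff.mpr (hmemB n))
  have hmono : ee Φ T ({ν' n} : Set ℕ) ≤ ee Φ T Δ :=
    he_mono _ hsing _ hΔℬ (Set.singleton_subset_iff.mpr hxΔ)
  have hnorm1 : ‖ee Φ T ({ν' n} : Set ℕ)‖ ≤ ‖ee Φ T Δ‖ := by
    apply norm_le_norm_of_abs_le_abs
    rw [abs_of_nonneg (he_nonneg _ hsing), abs_of_nonneg (he_nonneg _ hΔℬ)]
    exact hmono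
  have hdist : dist (g s) (g t) = ‖ee Φ T Δ‖ := by
    rw [hg, dist_eq_norm, ← norm_abs_eq_norm, he_abs _ hsℬ _ htℬ]
  rw [hdist]
  exact le_trans (hmemY n) hnorm1


lemma claim2
    {K : Type} [TopologicalSpace K]
    {E : Type} [NormedAddCommGroup E] [Lattice E] [IsOrderedAddMonoid E] [HasSolidNorm E] [NormedSpace ℝ E]
    [PosSMulStrictMono ℝ E] [PosSMulReflectLT ℝ E]
    [CompleteSpace E]
    (ℬ : Set (Set ℕ)) (Φ : Set ℕ → Set K) (u : E) (T : C(K, ℝ) →ₗ[ℝ] E)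
    (hBempty : (∅ : Set ℕ) ∈ ℬ) (hBcompl : ∀ A ∈ ℬ, Aᶜ ∈ ℬ)
    (hBfin : ∀ A : Set ℕ, A.Finite → A ∈ ℬ)
    (hTinj : Function.Injective T)
    (hTsup : ∀ f g : C(K, ℝ), T (f ⊔ g) = T f ⊔ T g) (hT1 : T 1 = u)
    (hTrange : Set.range T = {y : E | ∃ r : ℝ, 0 < r ∧ |y| ≤ r • u})
    (hΦbij : Set.BijOn Φ ℬ {U : Set K | IsClopen U})
    (hΦunion : ∀ A ∈ ℬ, ∀ B ∈ ℬ, Φ (A ∪ B) = Φ A ∪ Φ B)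
    (hΦinter : ∀ A ∈ ℬ, ∀ B ∈ ℬ, Φ (A ∩ B) = Φ A ∩ Φ B)
    (hΦcompl : ∀ A ∈ ℬ, Φ Aᶜ = (Φ A)ᶜ)
    (A : Set ℕ) (hA : A ∈ JPerp ℬ) :
    ∃ ε : ℝ, 0 < ε ∧ {n : ℕ | n ∈ A ∧ ‖ee Φ T ({n} : Set ℕ)‖ < ε}.Finite := by
  by_contra hc
  push_neg at hc
  have hSinf : ∀ m : ℕ, {n : ℕ | n ∈ A ∧ ‖ee Φ T ({n} : Set ℕ)‖ < (1/2 : ℝ) ^ m}.Infinite :=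
    fun m => hc ((1/2 : ℝ) ^ m) (by positivity)
  have hex : ∀ (x : ℕ) (k : ℕ),
      ∃ y, (y ∈ A ∧ ‖ee Φ T ({y} : Set ℕ)‖ < (1/2 : ℝ) ^ k) ∧ x < y := by
    intro x k
    obtain ⟨y, hy, hxy⟩ := (hSinf k).exists_gt x
    exact ⟨y, hy, hxy⟩
  choose! F hF1 hF2 using hex
  let ν : ℕ → ℕ := fun k => Nat.rec (F 0 0) (fun k ih => F ih (k + 1)) k
  have hν1 : ∀ k, ν k ∈ A ∧ ‖ee Φ T ({ν k} : Set ℕ)‖ < (1/2 : ℝ) ^ k := by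
    intro k
    induction k with
    | zero => exact hF1 0 0
    | succ k _ => exact hF1 (ν k) (k + 1)
  have hνlt : ∀ k, ν k < ν (k + 1) := fun k => hF2 (ν k) (k + 1)
  have hmono : StrictMono ν := strictMono_nat_of_lt_succ hνlt
  have hJ : Set.range ν ∈ JIdeal ℬ :=
    core_J ℬ Φ u T hBempty hBcompl hBfin hTinj hTsup hT1 hTrange hΦbij hΦunion hΦinter
      hΦcompl ν hmono.injective (fun k => (hν1 k).2.le)
  have hfin : (A ∩ Set.range ν).Finite := hA _ hJ
  have hsub : Set.range ν ⊆ A := by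
    rintro x ⟨k, rfl⟩
    exact (hν1 k).1
  rw [Set.inter_eq_right.mpr hsub] at hfin
  exact Set.infinite_range_of_injective hmono.injective hfin

/-- For an s-sick algebra `ℬ`, the ideal `J(ℬ)^⊥` is countably generated, and `J(ℬ)^⊥ ∩ ℬ`
is countable. -/
theorem stmt_16 (ℬ : Set (Set ℕ)) (h : IsSSickAlgebra ℬ) :
    (∃ X : ℕ → Set ℕ, (∀ m, X m ∈ JPerp ℬ) ∧
      ∀ A ∈ JPerp ℬ, ∃ F : Finset ℕ, A ⊆ ⋃ m ∈ F, X m) ∧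
    (JPerp ℬ ∩ ℬ).Countable := by
  obtain ⟨hBempty, hBuniv, hBcompl, hBunion, hBinter, hBfin, K, _, _, _, hsick,
    Φ, hΦbij, hΦunion, hΦinter, hΦcompl⟩ := h
  obtain ⟨E, _, _, _, _, _, _, _, _, _, u, T, hu, hTinj, hTsup, hT1, hTrange⟩ := hsick
  -- basic facts about `ee`
  have hclo : ∀ A ∈ ℬ, IsClopen (Φ A) := fun A hA => hΦbij.mapsTo hA
  have heU : ∀ A ∈ ℬ, ∀ B ∈ ℬ, ee Φ T (A ∪ B) = ee Φ T A ⊔ ee Φ T B := by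
    intro A hA B hB
    unfold ee
    rw [hΦunion A hA B hB, cind_sup (hclo A hA) (hclo B hB), hTsup]
  have he_mono : ∀ A ∈ ℬ, ∀ B ∈ ℬ, A ⊆ B → ee Φ T A ≤ ee Φ T B := by
    intro A hA B hB hAB
    have h1 := heU A hA B hB
    rw [Set.union_eq_self_of_subset_left hAB] at h1
    rw [h1]
    exact le_sup_left
  have he_nonneg : ∀ A ∈ ℬ, 0 ≤ ee Φ T A := by
    intro A hA
    have h2 : T ((0 : C(K, ℝ)) ⊔ cind (Φ A)) = T 0 ⊔ T (cind (Φ A)) := hTsup _ _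
    rw [sup_eq_right.mpr (cind_nonneg (hclo A hA)), map_zero] at h2
    unfold ee
    rw [h2]
    exact le_sup_left
  have he_inj : ∀ A ∈ ℬ, ∀ B ∈ ℬ, ee Φ T A = ee Φ T B → A = B := by
    intro A hA B hB hAB
    exact hΦbij.injOn hA hB (cind_inj (hclo A hA) (hclo B hB) (hTinj hAB))
  have he_abs : ∀ A ∈ ℬ, ∀ B ∈ ℬ,
      |ee Φ T A - ee Φ T B| = ee Φ T ((A ∩ Bᶜ) ∪ (B ∩ Aᶜ)) := by
    intro A hA B hB
    have mAB : A ∩ Bᶜ ∈ ℬ := hBinter A hA Bᶜ (hBcompl B hB)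
    have mBA : B ∩ Aᶜ ∈ ℬ := hBinter B hB Aᶜ (hBcompl A hA)
    have hphi : Φ ((A ∩ Bᶜ) ∪ (B ∩ Aᶜ)) = (Φ A ∩ (Φ B)ᶜ) ∪ (Φ B ∩ (Φ A)ᶜ) := by
      rw [hΦunion _ mAB _ mBA, hΦinter A hA Bᶜ (hBcompl B hB),
        hΦinter B hB Aᶜ (hBcompl A hA), hΦcompl B hB, hΦcompl A hA]
    unfold ee
    rw [hphi, ← cind_abs_sub (hclo A hA) (hclo B hB), ← map_sub, T_abs' hTsup]
  -- the generating sets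
  have hYJP : ∀ ε : ℝ, 0 < ε → {n : ℕ | ε ≤ ‖ee Φ T ({n} : Set ℕ)‖} ∈ JPerp ℬ := fun ε hε =>
    core_Y ℬ Φ T hBempty hBcompl hBinter hTinj hTsup hΦbij hΦunion hΦinter hΦcompl ε hε
  have hfinJP : ∀ A : Set ℕ, A.Finite → A ∈ JPerp ℬ := fun A hA B _ =>
    hA.subset Set.inter_subset_left
  have hunionJP : ∀ A ∈ JPerp ℬ, ∀ B ∈ JPerp ℬ, A ∪ B ∈ JPerp ℬ := by
    intro A hA B hB C hC
    rw [Set.union_inter_distrib_right]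
    exact (hA C hC).union (hB C hC)
  have hclaim2 : ∀ A ∈ JPerp ℬ,
      ∃ ε : ℝ, 0 < ε ∧ {n : ℕ | n ∈ A ∧ ‖ee Φ T ({n} : Set ℕ)‖ < ε}.Finite := fun A hA =>
    claim2 ℬ Φ u T hBempty hBcompl hBfin hTinj hTsup hT1 hTrange hΦbij hΦunion hΦinter
      hΦcompl A hA
  constructor
  · -- countably generated
    refine ⟨fun m => {n : ℕ | 1/((m : ℝ)+1) ≤ ‖ee Φ T ({n} : Set ℕ)‖} ∪ {n : ℕ | n < m},
      fun m => hunionJP _ (hYJP _ (by positivity)) _ (hfinJP _ (Set.finite_lt_nat m)), ?_⟩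
    intro A hA
    obtain ⟨ε, hε, hFin⟩ := hclaim2 A hA
    obtain ⟨m, hm⟩ := exists_nat_one_div_lt hε
    obtain ⟨N, hN⟩ := hFin.bddAbove
    refine ⟨{m, N + 1}, ?_⟩
    intro n hn
    by_cases hcase : (1 : ℝ)/((m : ℝ)+1) ≤ ‖ee Φ T ({n} : Set ℕ)‖
    · exact Set.mem_biUnion (Finset.mem_insert_self _ _) (Or.inl hcase)
    · push_neg at hcase
      have h2 : n ∈ {n : ℕ | n ∈ A ∧ ‖ee Φ T ({n} : Set ℕ)‖ < ε} := ⟨hn, by linarith⟩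
      have h3 : n ≤ N := hN h2
      refine Set.mem_biUnion (show N + 1 ∈ ({m, N + 1} : Finset ℕ) by simp) ?_
      exact Or.inr (Nat.lt_succ_of_le h3)
  · -- countability of JPerp ∩ ℬ
    set Q : ℕ × Finset ℕ → Set (Set ℕ) := fun p =>
      {A | A ∈ JPerp ℬ ∧ A ∈ ℬ ∧
        A \ {n : ℕ | 1/((p.1 : ℝ)+1) ≤ ‖ee Φ T ({n} : Set ℕ)‖} = ↑p.2} with hQ
    have hsub : JPerp ℬ ∩ ℬ ⊆ ⋃ p : ℕ × Finset ℕ, Q p := by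
      rintro A ⟨hA1, hA2⟩
      obtain ⟨ε, hε, hFin⟩ := hclaim2 A hA1
      obtain ⟨m, hm⟩ := exists_nat_one_div_lt hε
      have hdfin : (A \ {n : ℕ | 1/((m : ℝ)+1) ≤ ‖ee Φ T ({n} : Set ℕ)‖}).Finite := by
        apply hFin.subset
        rintro n ⟨hn1, hn2⟩
        simp only [Set.mem_setOf_eq, not_le] at hn2
        exact ⟨hn1, by linarith⟩
      refine Set.mem_iUnion.mpr ⟨(m, hdfin.toFinset), hA1, hA2, ?_⟩
      simp [hdfin]
    have hQc : ∀ p : ℕ × Finset ℕ, (Q p).Countable := by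
      rintro ⟨m, F⟩
      apply Set.countable_of_injective_of_countable_image
        (f := ee Φ T) (fun A hA B hB hAB => he_inj A hA.2.1 B hB.2.1 hAB)
      apply countable_of_eps_sep (ε := 1/((m : ℝ)+1)) (by positivity)
      rintro _ ⟨A, hA, rfl⟩ _ ⟨B, hB, rfl⟩ hne
      have hABne : A ≠ B := fun hh => hne (by rw [hh])
      have hAB : A ∈ ℬ := hA.2.1
      have hBB : B ∈ ℬ := hB.2.1
      have hΔℬ : (A ∩ Bᶜ) ∪ (B ∩ Aᶜ) ∈ ℬ :=
        hBunion _ (hBinter A hAB Bᶜ (hBcompl B hBB)) _ (hBinter B hBB Aᶜ (hBcompl A hAB))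
      have hne2 : ∃ n, (n ∈ A ∧ n ∉ B) ∨ (n ∈ B ∧ n ∉ A) := by
        by_contra hcon
        push_neg at hcon
        apply hABne
        ext n
        have := hcon n
        tauto
      obtain ⟨n, hn⟩ := hne2
      have hnΔ : n ∈ (A ∩ Bᶜ) ∪ (B ∩ Aᶜ) := by
        rcases hn with ⟨h1, h2⟩ | ⟨h1, h2⟩
        · exact Or.inl ⟨h1, h2⟩
        · exact Or.inr ⟨h1, h2⟩
      have hnY : (1 : ℝ)/((m : ℝ)+1) ≤ ‖ee Φ T ({n} : Set ℕ)‖ := by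
        by_contra hnot
        rcases hn with ⟨h1, h2⟩ | ⟨h1, h2⟩
        · have hmem : n ∈ A \ {k : ℕ | 1/((m : ℝ)+1) ≤ ‖ee Φ T ({k} : Set ℕ)‖} := ⟨h1, hnot⟩
          rw [hA.2.2] at hmem
          have hmem2 : n ∈ B \ {k : ℕ | 1/((m : ℝ)+1) ≤ ‖ee Φ T ({k} : Set ℕ)‖} := by
            rw [hB.2.2]
            exact hmem
          exact h2 hmem2.1
        · have hmem : n ∈ B \ {k : ℕ | 1/((m : ℝ)+1) ≤ ‖ee Φ T ({k} : Set ℕ)‖} := ⟨h1, hnot⟩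
          rw [hB.2.2] at hmem
          have hmem2 : n ∈ A \ {k : ℕ | 1/((m : ℝ)+1) ≤ ‖ee Φ T ({k} : Set ℕ)‖} := by
            rw [hA.2.2]
            exact hmem
          exact h2 hmem2.1
      have hsing : ({n} : Set ℕ) ∈ ℬ := hBfin _ (Set.finite_singleton n)
      have hmono2 : ee Φ T ({n} : Set ℕ) ≤ ee Φ T ((A ∩ Bᶜ) ∪ (B ∩ Aᶜ)) :=
        he_mono _ hsing _ hΔℬ (Set.singleton_subset_iff.mpr hnΔ)
      have hnorm1 : ‖ee Φ T ({n} : Set ℕ)‖ ≤ ‖ee Φ T ((A ∩ Bᶜ) ∪ (B ∩ Aᶜ))‖ := by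
        apply norm_le_norm_of_abs_le_abs
        rw [abs_of_nonneg (he_nonneg _ hsing), abs_of_nonneg (he_nonneg _ hΔℬ)]
        exact hmono2
      have hdist : dist (ee Φ T A) (ee Φ T B) = ‖ee Φ T ((A ∩ Bᶜ) ∪ (B ∩ Aᶜ))‖ := by
        rw [dist_eq_norm, ← norm_abs_eq_norm, he_abs _ hAB _ hBB]
      rw [hdist]
      exact le_trans hnY hnorm1
    exact (Set.countable_iUnion hQc).mono hsub
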